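/- arXiv:math/0311015 — 3 statements merged into one kernel-verified Lean document; each statement's English description precedes it below -/
import Mathlib

section
/- The class of Valdivia compact spaces is preserved by arbitrary products: if (K_i)_{i ∈ I} is a family of Valdivia compact spaces indexed by a set I, then the Tychonoff product ∏_{i ∈ I} K_i is Valdivia compact. -/
open unitInterval

universe u

/-- The Σ-product of copies of `[0,1]` indexed by `A`, with base point `0`:
the set of points of the cube `[0,1]^A` with countably many nonzero coordinates. -/
def SigmaProd (A : Type u) : Set (A → I) :=
  {x | {a : A | x a ≠ 0}.Countable}

/-- A space `K` is Valdivia compact if it is compact Hausdorff and embeds into some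
Tikhonov cube `[0,1]^A` so that the image meets the Σ-product in a dense subset of the image. -/
def IsValdivia (K : Type u) [TopologicalSpace K] : Prop :=
  CompactSpace K ∧ T2Space K ∧
    ∃ (A : Type u) (e : K → (A → I)),
      Topology.IsEmbedding e ∧
      Set.range e ⊆ closure (Set.range e ∩ SigmaProd A)

/-!
The only obstruction to embedding a product of Valdivia compacta coordinatewise is that the
product of Σ-products is not a Σ-product: a point may have uncountably many nonzero blocks.
So first move, in each factor, a point `dᵢ` of the dense set `eᵢ⁻¹(Σ)` to the origin; this is
done by doubling the coordinates and recording the positive and negative parts of `eᵢ - eᵢ(dᵢ)`,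
which keeps the Σ-product invariant since `eᵢ(dᵢ)` has countable support. Then the points of
the product that lie in `eᵢ⁻¹(Σ)` in every coordinate and agree with `d` in all but finitely
many coordinates are dense, and their images have countable support.
-/

open Topology Set Filter

namespace unitInterval

noncomputable def truncSub (x y : I) : I :=
  projIcc 0 1 zero_le_one ((x : ℝ) - y)

lemma coe_truncSub (x y : I) : (truncSub x y : ℝ) = max ((x : ℝ) - y) 0 := by
  rw [truncSub, coe_projIcc, min_eq_right (by linarith [x.2.2, y.2.1]), max_comm]

@[simp]
lemma truncSub_self (x : I) : truncSub x x = 0 :=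
  Subtype.ext <| by simp [coe_truncSub]

lemma coe_truncSub_sub_coe_truncSub (x y : I) :
    (truncSub x y : ℝ) - truncSub y x = (x : ℝ) - y := by
  rw [coe_truncSub, coe_truncSub]
  rcases le_total (y : ℝ) x with hyx | hxy
  · rw [max_eq_left (by linarith), max_eq_right (by linarith)]; ring
  · rw [max_eq_right (by linarith), max_eq_left (by linarith)]; ring

end unitInterval

@[fun_prop]
lemma Continuous.truncSub {X : Type*} [TopologicalSpace X] {f g : X → I} (hf : Continuous f)
    (hg : Continuous g) : Continuous fun x => truncSub (f x) (g x) :=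
  continuous_projIcc.comp <| by fun_prop

section CubeShift

variable {A : Type*}

noncomputable def cubeShift (c x : A → I) : A × Bool → I :=
  fun p => bif p.2 then truncSub (x p.1) (c p.1) else truncSub (c p.1) (x p.1)

@[simp]
lemma cubeShift_self (c : A → I) : cubeShift c c = 0 := by
  funext ⟨a, b⟩
  cases b <;> simp [cubeShift]

lemma continuous_cubeShift (c : A → I) : Continuous (cubeShift c) := by
  refine continuous_pi fun ⟨a, b⟩ => ?_
  cases b <;> simp only [cubeShift, cond_true, cond_false] <;> fun_prop

lemma isEmbedding_cubeShift (c : A → I) : IsEmbedding (cubeShift c) := by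
  let unshift : (A × Bool → I) → A → I :=
    fun u a => projIcc 0 1 zero_le_one ((u (a, true) : ℝ) - u (a, false) + c a)
  have hunshift : Function.LeftInverse unshift (cubeShift c) := fun x => by
    funext a
    simp only [unshift, cubeShift, cond_true, cond_false, coe_truncSub_sub_coe_truncSub,
      sub_add_cancel, projIcc_val]
  exact hunshift.isEmbedding (continuous_pi fun a => continuous_projIcc.comp (by fun_prop))
    (continuous_cubeShift c)

end CubeShift

lemma zero_mem_sigmaProd (A : Type u) : (0 : A → I) ∈ SigmaProd A := by
  simp [SigmaProd]

lemma cubeShift_mem_sigmaProd {A : Type u} {c x : A → I} (hc : c ∈ SigmaProd A)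
    (hx : x ∈ SigmaProd A) : cubeShift c x ∈ SigmaProd (A × Bool) := by
  refine ((hx.union hc).prod (countable_univ (α := Bool))).mono ?_
  rintro ⟨a, b⟩ hp
  refine ⟨?_, mem_univ b⟩
  by_contra hxc
  simp only [mem_union, mem_ofPred_eq, not_or, not_not] at hxc
  cases b <;> simp [cubeShift, hxc] at hp

lemma isEmbedding_sigma_uncurry {ι : Type*} {A : ι → Type*} {Z : Type*} [TopologicalSpace Z] :
    IsEmbedding fun (y : ∀ i, A i → Z) (q : Σ i, A i) => y q.1 q.2 :=
  Function.LeftInverse.isEmbedding (f := fun z i a => z ⟨i, a⟩) (fun _ => rfl)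
    (by fun_prop) (by fun_prop)

lemma sigma_uncurry_mem_sigmaProd {ι : Type u} {A : ι → Type u} {y : ∀ i, A i → I}
    (hy : ∀ i, y i ∈ SigmaProd (A i)) (hsupp : {i | y i ≠ 0}.Countable) :
    (fun q : Σ i, A i => y q.1 q.2) ∈ SigmaProd (Σ i, A i) := by
  refine (hsupp.biUnion fun i _ => (hy i).image (Sigma.mk i)).mono ?_
  rintro ⟨i, a⟩ ha
  refine mem_biUnion (x := i) (fun hi => ha ?_) ⟨a, ha, rfl⟩
  simp [hi]

lemma tendsto_finset_piecewise_atTop {ι : Type*} {X : ι → Type*} [∀ i, TopologicalSpace (X i)]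
    [DecidableEq ι] (x d : ∀ i, X i) :
    Tendsto (fun F : Finset ι => F.piecewise x d) atTop (𝓝 x) :=
  tendsto_pi_nhds.2 fun i => tendsto_const_nhds.congr' <|
    (eventually_ge_atTop {i}).mono fun _ hF =>
      (Finset.piecewise_eq_of_mem _ _ _ (hF (Finset.mem_singleton_self i))).symm

lemma dense_setOf_finite_ne_and_forall_mem {ι : Type*} {X : ι → Type*}
    [∀ i, TopologicalSpace (X i)] {D : ∀ i, Set (X i)} (hD : ∀ i, Dense (D i))
    {d : ∀ i, X i} (hd : ∀ i, d i ∈ D i) :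
    Dense {z : ∀ i, X i | {i | z i ≠ d i}.Finite ∧ ∀ i, z i ∈ D i} := by
  classical
  rw [← dense_closure]
  refine (dense_pi univ fun i _ => hD i).mono fun x hx => ?_
  refine mem_closure_of_tendsto (tendsto_finset_piecewise_atTop x d) (Eventually.of_forall ?_)
  intro F
  refine ⟨F.finite_toSet.subset fun i hi => ?_, fun i => ?_⟩
  · by_contra hiF
    exact hi (F.piecewise_eq_of_notMem _ _ hiF)
  · by_cases hiF : i ∈ F
    · simpa [F.piecewise_eq_of_mem _ _ hiF] using hx i (mem_univ i)
    · simpa [F.piecewise_eq_of_notMem _ _ hiF] using hd i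

lemma Topology.IsInducing.range_subset_closure_inter_iff {X Y : Type*} [TopologicalSpace X]
    [TopologicalSpace Y] {e : X → Y} (he : IsInducing e) (s : Set Y) :
    range e ⊆ closure (range e ∩ s) ↔ Dense (e ⁻¹' s) := by
  rw [he.dense_iff, image_preimage_eq_inter_range, inter_comm, range_subset_iff]

namespace IsValdivia

variable {K : Type u} [TopologicalSpace K]

lemma of_isEmbedding [CompactSpace K] [T2Space K] {A : Type u} {e : K → A → I}
    (he : IsEmbedding e) (hdense : Dense (e ⁻¹' SigmaProd A)) : IsValdivia K :=
  ⟨‹_›, ‹_›, A, e, he, (he.isInducing.range_subset_closure_inter_iff _).2 hdense⟩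

lemma of_isEmpty [IsEmpty K] : IsValdivia K :=
  of_isEmbedding (A := PUnit) (e := fun _ _ => 0) (.of_subsingleton _) isEmptyElim

lemma exists_isEmbedding_apply_eq_zero (hK : IsValdivia K) [Nonempty K] :
    ∃ (A : Type u) (e : K → A → I) (d : K),
      IsEmbedding e ∧ Dense (e ⁻¹' SigmaProd A) ∧ e d = 0 := by
  obtain ⟨-, -, A, g, hg, hgdense⟩ := hK
  rw [hg.isInducing.range_subset_closure_inter_iff] at hgdense
  obtain ⟨d, hd⟩ := hgdense.nonempty
  exact ⟨A × Bool, cubeShift (g d) ∘ g, d, (isEmbedding_cubeShift _).comp hg,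
    hgdense.mono fun k hk => cubeShift_mem_sigmaProd hd hk, cubeShift_self _⟩

end IsValdivia

/-- Valdivia compact spaces are preserved by arbitrary Tychonoff products. -/
theorem isValdivia_pi {ι : Type u} (K : ι → Type u) [∀ i, TopologicalSpace (K i)]
    (h : ∀ i, IsValdivia (K i)) : IsValdivia (∀ i, K i) := by
  rcases isEmpty_or_nonempty (∀ i, K i) with _ | ⟨⟨x⟩⟩
  · exact .of_isEmpty
  have := fun i => (h i).1
  have := fun i => (h i).2.1
  have := fun i => Nonempty.intro (x i)
  choose A f d hf hdense hzero using fun i => (h i).exists_isEmbedding_apply_eq_zero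
  refine .of_isEmbedding (A := Σ i, A i) (e := fun z q => f q.1 (z q.1) q.2)
    (isEmbedding_sigma_uncurry.comp (.piMap hf)) ?_
  have hd : ∀ i, d i ∈ f i ⁻¹' SigmaProd (A i) := fun i => by
    simpa [hzero i] using zero_mem_sigmaProd (A i)
  refine (dense_setOf_finite_ne_and_forall_mem hdense hd).mono ?_
  rintro z ⟨hfin, hz⟩
  refine sigma_uncurry_mem_sigmaProd hz (hfin.countable.mono fun i hi => ?_)
  exact fun hzd => hi (by rw [hzd, hzero])
end

section
/- There exists an indecomposable torsion-free abelian group of cardinality ℵ₁: an abelian group A such that A is torsion-free, the cardinality of A is ℵ₁, and whenever A is the internal direct sum of two subgroups B and C (i.e., B ⊓ C = ⊥ and B ⊔ C = A), either B is the trivial subgroup or C is the trivial subgroup. -/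
/-!
Let `A ≤ ℤ_[p]` be `p`-pure (`p * x ∈ A → x ∈ A`), e.g. `A = ℤ_[p] ∩ K` for a subfield `K` of
`ℚ_[p]`, and let `A = B ⊕ C`. If `u ∈ B`, `v ∈ C` and `u + v = p * y`, then decomposing
`y = b + c` shows `u = p * b`, so `p` divides `u` inside `B`. If `B ≠ 0`, not all of `B` is
divisible by `p` (otherwise every element would be divisible by all powers of `p`), so `B`
contains a unit `b`; as `ℤ_[p] / p = 𝔽_p`, every `c ∈ C` is `≡ k * b (mod p)`, hence divisible by
`p` inside `C`, and the same argument gives `C = 0`. Taking `K` generated by `ℵ₁` elements of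
`ℤ_[p]` (which has cardinality `𝔠`) makes `A` of cardinality `ℵ₁`.
-/

open Cardinal IsLocalRing

namespace PadicInt

variable {p : ℕ} [Fact p.Prime]

variable (p) in
theorem continuum_le_mk : 𝔠 ≤ #ℤ_[p] :=
  (continuum_le_cardinal_of_isOpen ℚ_[p] isOpenEmbedding_coe.isOpen_range
    ⟨_, Set.mem_range_self (0 : ℤ_[p])⟩).trans_eq
    (mk_range_eq _ isOpenEmbedding_coe.injective)

theorem eq_zero_of_forall_pow_dvd {x : ℤ_[p]} (h : ∀ n, (p : ℤ_[p]) ^ n ∣ x) : x = 0 := by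
  have hx : x ∈ ⨅ n : ℕ, maximalIdeal ℤ_[p] ^ n := Submodule.mem_iInf _ |>.2 fun n => by
    rw [maximalIdeal_eq_span_p, Ideal.span_singleton_pow, Ideal.mem_span_singleton]
    exact h n
  rwa [Ideal.iInf_pow_eq_bot_of_isLocalRing _ (maximalIdeal.isMaximal _).ne_top,
    Ideal.mem_bot] at hx

theorem isUnit_of_not_dvd {x : ℤ_[p]} (h : ¬(p : ℤ_[p]) ∣ x) : IsUnit x := by
  rwa [← notMem_maximalIdeal, maximalIdeal_eq_span_p, Ideal.mem_span_singleton]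

theorem exists_dvd_sub_natCast_mul {b : ℤ_[p]} (hb : IsUnit b) (c : ℤ_[p]) :
    ∃ k : ℕ, (p : ℤ_[p]) ∣ c - k * b := by
  obtain ⟨u, rfl⟩ := hb
  obtain ⟨k, -, hk⟩ := exists_mem_range ((↑u⁻¹ : ℤ_[p]) * c)
  rw [maximalIdeal_eq_span_p, Ideal.mem_span_singleton] at hk
  refine ⟨k, ?_⟩
  convert dvd_mul_of_dvd_right hk (u : ℤ_[p]) using 1
  rw [mul_sub, Units.mul_inv_cancel_left, mul_comm]

section Indecomposable

variable {A : AddSubgroup ℤ_[p]} (hA : ∀ x, (p : ℤ_[p]) * x ∈ A → x ∈ A)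
  {B C : AddSubgroup A} (hBC : IsCompl B C)
include hA hBC

theorem exists_mem_eq_mul_of_dvd_add {u v : A} (hu : u ∈ B) (hv : v ∈ C)
    (hdvd : (p : ℤ_[p]) ∣ u + v) : ∃ u' ∈ B, (u : ℤ_[p]) = p * u' := by
  obtain ⟨y, hy⟩ := hdvd
  obtain ⟨b, hb, c, hc, hbc⟩ := AddSubgroup.mem_sup.1
    (hBC.sup_eq_top ▸ AddSubgroup.mem_top (⟨y, hA y (hy ▸ (u + v).2)⟩ : A))
  have hdiff : u - p • b = -(v - p • c) := by
    apply Subtype.ext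
    have hy' : (b + c : ℤ_[p]) = y := congrArg Subtype.val hbc
    push_cast [nsmul_eq_mul]
    linear_combination hy - (p : ℤ_[p]) * hy'
  have hzero : u - p • b = 0 := (AddSubgroup.disjoint_def.1 hBC.disjoint)
    (B.sub_mem hu (B.nsmul_mem hb p)) (hdiff ▸ C.neg_mem (C.sub_mem hv (C.nsmul_mem hc p)))
  refine ⟨b, hb, ?_⟩
  rw [sub_eq_zero.1 hzero]
  simp [nsmul_eq_mul]

theorem eq_bot_of_forall_dvd (h : ∀ b ∈ B, (p : ℤ_[p]) ∣ b) : B = ⊥ := by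
  have hdiv (b : A) (hb : b ∈ B) : ∃ b' ∈ B, (b : ℤ_[p]) = p * b' :=
    exists_mem_eq_mul_of_dvd_add hA hBC hb C.zero_mem (by simpa using h b hb)
  have hpow (n : ℕ) : ∀ b ∈ B, (p : ℤ_[p]) ^ n ∣ b := by
    induction n with
    | zero => simp
    | succ n ih =>
      intro b hb
      obtain ⟨b', hb', hbb'⟩ := hdiv b hb
      rw [hbb', pow_succ']
      exact mul_dvd_mul_left _ (ih b' hb')
  exact (AddSubgroup.eq_bot_iff_forall B).2 fun b hb =>
    Subtype.ext (eq_zero_of_forall_pow_dvd fun n => hpow n b hb)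

theorem eq_bot_or_eq_bot_of_isCompl : B = ⊥ ∨ C = ⊥ := by
  refine or_iff_not_imp_left.2 fun hB => eq_bot_of_forall_dvd hA hBC.symm fun c hc => ?_
  obtain ⟨b, hbB, hb⟩ : ∃ b ∈ B, ¬(p : ℤ_[p]) ∣ b := by
    by_contra! h
    exact hB (eq_bot_of_forall_dvd hA hBC h)
  obtain ⟨k, hk⟩ := exists_dvd_sub_natCast_mul (isUnit_of_not_dvd hb) c
  obtain ⟨c', -, hc'⟩ := exists_mem_eq_mul_of_dvd_add hA hBC.symm hc
    (B.neg_mem (B.nsmul_mem hbB k)) (by simpa [nsmul_eq_mul, sub_eq_add_neg] using hk)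
  exact ⟨c', hc'⟩

end Indecomposable

noncomputable def ofSubfield (K : Subfield ℚ_[p]) : Subring ℤ_[p] :=
  K.toSubring.comap Coe.ringHom

theorem mem_ofSubfield {K : Subfield ℚ_[p]} {x : ℤ_[p]} : x ∈ ofSubfield K ↔ (x : ℚ_[p]) ∈ K :=
  Iff.rfl

theorem mem_ofSubfield_of_natCast_mul_mem {K : Subfield ℚ_[p]} {n : ℕ} (hn : n ≠ 0) {x : ℤ_[p]}
    (h : (n : ℤ_[p]) * x ∈ ofSubfield K) : x ∈ ofSubfield K := by
  have hn' : (n : ℚ_[p]) ≠ 0 := Nat.cast_ne_zero.2 hn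
  rw [mem_ofSubfield] at h ⊢
  simpa [hn'] using K.mul_mem (K.inv_mem (natCast_mem K n)) h

theorem mk_ofSubfield_closure {S : Set ℤ_[p]} (hS : ℵ₀ ≤ #S) :
    #(ofSubfield (Subfield.closure ((↑) '' S : Set ℚ_[p]))) = #S := by
  refine le_antisymm ?_ (mk_le_mk_of_subset fun x hx => Subfield.subset_closure ⟨x, hx, rfl⟩)
  calc #(ofSubfield (Subfield.closure ((↑) '' S : Set ℚ_[p])))
      ≤ #(Subfield.closure ((↑) '' S : Set ℚ_[p])) :=
        mk_le_of_injective (f := fun x => ⟨x, x.2⟩) fun x y h =>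
          Subtype.ext (PadicInt.ext (congrArg Subtype.val h :))
    _ ≤ max #((↑) '' S : Set ℚ_[p]) ℵ₀ := Subfield.cardinalMk_closure_le_max _
    _ ≤ #S := max_le mk_image_le hS

end PadicInt

open PadicInt in
/-- There exists an indecomposable torsion-free abelian group of cardinality `ℵ₁`. -/
theorem exists_indecomposable_torsionFree_of_card_aleph_one :
    ∃ (A : Type) (instA : AddCommGroup A),
      letI := instA
      (∀ (n : ℕ) (a : A), 0 < n → n • a = 0 → a = 0) ∧
      Cardinal.mk A = Cardinal.aleph 1 ∧
      ∀ B C : AddSubgroup A, B ⊓ C = ⊥ → B ⊔ C = ⊤ → B = ⊥ ∨ C = ⊥ := by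
  obtain ⟨S, hS⟩ := le_mk_iff_exists_set.1 (aleph_one_le_continuum.trans (continuum_le_mk 2))
  have hS₀ : ℵ₀ ≤ #S := by rw [hS]; exact aleph0_le_aleph 1
  set A := (ofSubfield (Subfield.closure ((↑) '' S : Set ℚ_[2]))).toAddSubgroup
  refine ⟨A, inferInstance, ?_, ?_, ?_⟩
  · intro n a hn h
    exact (nsmul_eq_zero_iff.1 h).resolve_right hn.ne'
  · exact (mk_ofSubfield_closure hS₀).trans hS
  · intro B C hinf hsup
    exact eq_bot_or_eq_bot_of_isCompl (fun x => mem_ofSubfield_of_natCast_mul_mem two_ne_zero)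
      (IsCompl.of_eq hinf hsup)
end

section
/- The Pontryagin dual of a torsion-free discrete abelian group is connected: if A is a torsion-free abelian group (with the discrete topology), then the Pontryagin dual group A* = Hom(A, 𝕋) of all group homomorphisms from A to the circle group 𝕋, equipped with the topology of pointwise convergence (equivalently, the compact-open topology), is a connected topological space. -/
/-!
A compact group in which every element has an `n`-th root for every `n ≠ 0` is connected:
a clopen neighbourhood of `1` contains an open normal subgroup `U`, which has finite index
`m`, so it contains every `m`-th power, i.e. everything. The dual of a torsion-free discrete
group is compact, and it is divisible because `𝕋` is a divisible, hence injective, `ℤ`-module: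
a character `χ` extends along the injective map `a ↦ a ^ n` to a character `ψ` with
`ψ ^ n = χ`.
-/

open Function

noncomputable instance : DivisibleBy (Additive Circle) ℤ :=
  (Additive.ofMul.surjective.comp Circle.exp_surjective).divisibleBy _ fun x n => by
    simp only [comp_apply, Circle.exp_zsmul, ofMul_zpow]

theorem AddMonoidHom.exists_nsmul_eq {A Q : Type*} [AddCommGroup A] [IsAddTorsionFree A]
    [AddCommGroup Q] [DivisibleBy Q ℤ] (f : A →+ Q) {n : ℕ} (hn : n ≠ 0) :
    ∃ g : A →+ Q, n • g = f := by
  obtain ⟨g, hg⟩ := (Module.Baer.of_divisible Q).extension_property_addMonoidHom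
    (n • AddMonoidHom.id A) (IsAddTorsionFree.nsmul_right_injective hn) f
  refine ⟨g, AddMonoidHom.ext fun a => ?_⟩
  simpa using DFunLike.congr_fun hg a

theorem PontryaginDual.surjective_pow {A : Type*} [CommGroup A] [IsMulTorsionFree A]
    [TopologicalSpace A] [DiscreteTopology A] {n : ℕ} (hn : n ≠ 0) :
    Surjective fun ψ : PontryaginDual A => ψ ^ n := fun χ => by
  obtain ⟨g, hg⟩ := (MonoidHom.toAdditive χ.toMonoidHom).exists_nsmul_eq hn
  refine ⟨⟨MonoidHom.toAdditive.symm g, continuous_of_discreteTopology⟩, ?_⟩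
  refine PontryaginDual.ext fun a => ?_
  exact (ContinuousMonoidHom.pow_apply _ n a).trans congr(Additive.toMul ($hg (Additive.ofMul a)))

section CompactGroup

variable {G : Type*} [Group G] [TopologicalSpace G] [IsTopologicalGroup G] [CompactSpace G]

theorem OpenNormalSubgroup.mem_of_surjective_pow
    (h : ∀ n : ℕ, n ≠ 0 → Surjective fun g : G => g ^ n) (U : OpenNormalSubgroup G)
    (g : G) : g ∈ U := by
  have : U.FiniteIndex := U.finiteIndex_of_finite_quotient
  obtain ⟨w, rfl⟩ : ∃ w : G, w ^ U.toSubgroup.index = g :=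
    h _ Subgroup.FiniteIndex.index_ne_zero g
  exact U.toSubgroup.pow_index_mem w

theorem connectedSpace_of_surjective_pow
    (h : ∀ n : ℕ, n ≠ 0 → Surjective fun g : G => g ^ n) : ConnectedSpace G := by
  have : PreconnectedSpace G := preconnectedSpace_of_forall_constant fun f hf x y => by
    obtain ⟨U, hU⟩ := IsTopologicalGroup.exist_openNormalSubgroup_sub_clopen_nhds_of_one
      ((isClopen_discrete {f 1}).preimage hf) rfl
    rw [hU (U.mem_of_surjective_pow h x), hU (U.mem_of_surjective_pow h y)]
  exact { toNonempty := ⟨1⟩ }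

end CompactGroup

/-- The Pontryagin dual of a torsion-free discrete abelian group is connected. -/
theorem pontryaginDual_connected_of_torsionFree
    (A : Type*) [CommGroup A] [TopologicalSpace A] [DiscreteTopology A]
    (htf : ∀ (n : ℕ) (a : A), 0 < n → a ^ n = 1 → a = 1) :
    ConnectedSpace (PontryaginDual A) := by
  have : IsMulTorsionFree A := isMulTorsionFree_iff_not_isOfFinOrder.2 fun a ha hfin => by
    obtain ⟨n, hn, hpow⟩ := isOfFinOrder_iff_pow_eq_one.1 hfin
    exact ha (htf n a hn hpow)
  exact connectedSpace_of_surjective_pow fun _ hn => PontryaginDual.surjective_pow hn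
end
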